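/- Let $(a_1,\dots,a_m)$ be a telescopic sequence with gap sequence $w_1<\cdots<w_g$. Define the partition $\mu=(w_g-(g-1),\,w_{g-1}-(g-2),\,\dots,\,w_1-0)$. Then the Young diagram of $\mu$ is symmetric, i.e., $\mu$ equals its conjugate (transpose) partition. -/

import Mathlib

/-- `dseq a i = gcd(a 1, …, a i)`. -/
def dseq (a : ℕ → ℕ) (i : ℕ) : ℕ := Finset.gcd (Finset.Icc 1 i) a

/-- membership in the numerical semigroup generated by `a 1, …, a m`. -/
def InSemigroup (m : ℕ) (a : ℕ → ℕ) (x : ℕ) : Prop :=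
  ∃ c : ℕ → ℕ, x = ∑ i ∈ Finset.Icc 1 m, c i * a i

/-- `(a 1, …, a m)` is a telescopic sequence. -/
def Telescopic (m : ℕ) (a : ℕ → ℕ) : Prop :=
  2 ≤ m ∧ (∀ i, 1 ≤ i → i ≤ m → 0 < a i) ∧ dseq a m = 1 ∧
  ∀ i, 2 ≤ i → i ≤ m → ∃ c : ℕ → ℕ,
    a i / dseq a i = ∑ j ∈ Finset.Icc 1 (i - 1), c j * (a j / dseq a (i - 1))

/-- membership in the restricted exponent set `B(A_m)`. -/
def InB (m : ℕ) (a : ℕ → ℕ) (k : ℕ → ℕ) : Prop :=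
  (∀ j, (j = 0 ∨ m < j) → k j = 0) ∧
  ∀ i, 2 ≤ i → i ≤ m → k i ≤ dseq a (i - 1) / dseq a i - 1

/-!
Put `e_j = d_{j-1} / d_j`. Every integer has a unique box representation
`k₁ a₁ + ∑_{j=2}^{m} k_j a_j` with `0 ≤ k_j < e_j`: the digit `k_j` is forced modulo `e_j`,
where `a_j / d_j` is invertible. The telescopic condition says that `e_j a_j` is a combination
of `a₁, …, a_{j-1}`, so any nonnegative combination can be carried into the box with `k₁ ≥ 0`;
hence `n ∈ S` iff `k₁ ≥ 0`. Since `(k₁, k_j) ↦ (-1 - k₁, e_j - 1 - k_j)` represents `F - n` for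
`F = ∑_j (e_j - 1) a_j - a₁`, the semigroup is symmetric: `n ∈ S ↔ F - n ∉ S`.

For a symmetric semigroup, the row `w_t - (t - 1)` counts the elements of `S` below `w_t`, and
`n ↦ F - n` exchanges them with the gaps above `F - w_t`. Counting gaps with `Nat.count`, the
number of rows of length at least `j` becomes the length of row `g + 1 - j`.
-/

open Finset

lemma card_filter_Icc_reflect (P : ℕ → Prop) [DecidablePred P] (g : ℕ) :
    #{i ∈ Icc 1 g | P (g + 1 - i)} = #{i ∈ Icc 1 g | P i} := by
  refine card_nbij' (fun i => g + 1 - i) (fun i => g + 1 - i) ?_ ?_ ?_ ?_ <;>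
    intro i hi <;> simp only [coe_filter, Set.mem_ofPred_eq, mem_Icc] at hi ⊢
  · exact ⟨⟨by omega, by omega⟩, hi.2⟩
  · exact ⟨⟨by omega, by omega⟩, by rw [Nat.sub_sub_self (by omega)]; exact hi.2⟩
  all_goals omega

lemma Nat.count_le_count_iff_le {p : ℕ → Prop} [DecidablePred p] {n : ℕ} (hn : p n) {y : ℕ} :
    Nat.count p y ≤ Nat.count p n ↔ y ≤ n := by
  refine ⟨fun h => ?_, fun h => Nat.count_monotone p h⟩
  by_contra! hlt
  exact (Nat.count_strict_mono hn hlt).not_ge h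

def IsSymmetricAt (p : ℕ → Prop) (F : ℕ) : Prop :=
  ∀ n, ¬ p n ↔ n ≤ F ∧ p (F - n)

structure IsGapEnumeration (p : ℕ → Prop) (g : ℕ) (w : ℕ → ℕ) : Prop where
  strictMonoOn : StrictMonoOn w (Set.Icc 1 g)
  not_mem : ∀ i, 1 ≤ i → i ≤ g → ¬ p (w i)
  surj : ∀ n, ¬ p n → ∃ i, 1 ≤ i ∧ i ≤ g ∧ w i = n

variable {p : ℕ → Prop} {F g : ℕ} {w : ℕ → ℕ}

namespace IsSymmetricAt

lemma le_of_not_mem (hp : IsSymmetricAt p F) {n : ℕ} (hn : ¬ p n) : n ≤ F :=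
  ((hp n).1 hn).1

lemma mem_sub_of_not_mem (hp : IsSymmetricAt p F) {n : ℕ} (hn : ¬ p n) : p (F - n) :=
  ((hp n).1 hn).2

variable [DecidablePred p]

/-- `n ↦ F - n` maps the members below `x` onto the gaps in `[F + 1 - x, F]`. -/
lemma sub_count_add_count_sub (hp : IsSymmetricAt p F) {x : ℕ} (hx : x ≤ F + 1) :
    x - Nat.count (¬ p ·) x + Nat.count (¬ p ·) (F + 1 - x) = Nat.count (¬ p ·) (F + 1) := by
  induction x with
  | zero => simp
  | succ x ih =>
    have hreflect : ¬ p (F - x) ↔ p x := by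
      rw [hp, Nat.sub_sub_self (by omega)]; exact and_iff_right (Nat.sub_le F x)
    have hle := Nat.count_le (p := (¬ p ·)) (n := x)
    rw [show F + 1 - x = F - x + 1 by omega, Nat.count_succ] at ih
    rw [Nat.count_succ, show F + 1 - (x + 1) = F - x by omega]
    by_cases hpx : p x <;> simp only [hpx, hreflect, not_true, not_false_eq_true, if_true,
      if_false] at ih ⊢ <;> omega

end IsSymmetricAt

variable [DecidablePred p]

namespace IsGapEnumeration

lemma card_filter_lt (hw : IsGapEnumeration p g w) (y : ℕ) :
    #{t ∈ Icc 1 g | w t < y} = Nat.count (¬ p ·) y := by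
  rw [Nat.count_eq_card_filter_range]
  refine card_bij (fun t _ => w t) ?_ ?_ ?_
  · intro t ht
    simp only [mem_filter, mem_Icc, mem_range] at ht ⊢
    exact ⟨ht.2, hw.not_mem t ht.1.1 ht.1.2⟩
  · intro t₁ h₁ t₂ h₂ heq
    simp only [mem_filter, mem_Icc] at h₁ h₂
    exact hw.strictMonoOn.injOn h₁.1 h₂.1 heq
  · intro n hn
    simp only [mem_filter, mem_range] at hn
    obtain ⟨t, ht₁, ht₂, rfl⟩ := hw.surj n hn.2
    exact ⟨t, by simp [ht₁, ht₂, hn.1], rfl⟩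

lemma count_apply (hw : IsGapEnumeration p g w) {t : ℕ} (ht₁ : 1 ≤ t) (ht₂ : t ≤ g) :
    Nat.count (¬ p ·) (w t) = t - 1 := by
  have hlt : ∀ u ∈ Icc 1 g, w u < w t ↔ u < t := fun u hu =>
    hw.strictMonoOn.lt_iff_lt (mem_Icc.1 hu) ⟨ht₁, ht₂⟩
  have hfilter : {u ∈ Icc 1 g | w u < w t} = Icc 1 (t - 1) := by
    ext u
    simp only [mem_filter]
    constructor
    · rintro ⟨hu, hwu⟩
      have := (hlt u hu).1 hwu
      simp only [mem_Icc] at hu ⊢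
      omega
    · intro hu
      simp only [mem_Icc] at hu
      have hu' : u ∈ Icc 1 g := mem_Icc.2 ⟨hu.1, by omega⟩
      exact ⟨hu', (hlt u hu').2 (by omega)⟩
  rw [← hw.card_filter_lt, hfilter, Nat.card_Icc]
  omega

lemma count_succ_apply (hw : IsGapEnumeration p g w) {t : ℕ} (ht₁ : 1 ≤ t) (ht₂ : t ≤ g) :
    Nat.count (¬ p ·) (w t + 1) = t := by
  rw [Nat.count_succ_eq_succ_count (hw.not_mem t ht₁ ht₂), hw.count_apply ht₁ ht₂]
  omega

lemma count_succ_eq_of_isSymmetricAt (hw : IsGapEnumeration p g w) (hp : IsSymmetricAt p F) :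
    Nat.count (¬ p ·) (F + 1) = g := by
  rw [← hw.card_filter_lt, filter_true_of_mem, Nat.card_Icc, Nat.add_sub_cancel]
  intro t ht
  rw [mem_Icc] at ht
  exact Nat.lt_succ_of_le (hp.le_of_not_mem (hw.not_mem t ht.1 ht.2))

/-- The `t`-th row of the partition, `w t - (t - 1)`, counts the members of `p` below `w t`. -/
lemma sub_add_count (hw : IsGapEnumeration p g w) (hp : IsSymmetricAt p F) {t : ℕ}
    (ht₁ : 1 ≤ t) (ht₂ : t ≤ g) : w t - (t - 1) + Nat.count (¬ p ·) (F + 1 - w t) = g := by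
  have hwt := hp.le_of_not_mem (hw.not_mem t ht₁ ht₂)
  rw [← hw.count_apply ht₁ ht₂, hp.sub_count_add_count_sub (by omega),
    hw.count_succ_eq_of_isSymmetricAt hp]

lemma le_sub_iff (hw : IsGapEnumeration p g w) (hp : IsSymmetricAt p F) {s t : ℕ}
    (hs₁ : 1 ≤ s) (hs₂ : s ≤ g) (ht₁ : 1 ≤ t) (ht₂ : t ≤ g) :
    g + 1 - s ≤ w t - (t - 1) ↔ F - w s < w t := by
  have hrow := hw.sub_add_count hp ht₁ ht₂
  have hcount := Nat.count_le_count_iff_le (p := (¬ p ·)) (hw.not_mem s hs₁ hs₂) (y := F + 1 - w t)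
  rw [hw.count_apply hs₁ hs₂] at hcount
  have hws := hp.le_of_not_mem (hw.not_mem s hs₁ hs₂)
  have hwt := hp.le_of_not_mem (hw.not_mem t ht₁ ht₂)
  omega

lemma card_filter_sub_lt (hw : IsGapEnumeration p g w) (hp : IsSymmetricAt p F) {s : ℕ}
    (hs₁ : 1 ≤ s) (hs₂ : s ≤ g) : #{t ∈ Icc 1 g | F - w s < w t} = w s - (s - 1) := by
  have hgap := hw.not_mem s hs₁ hs₂
  have hcompl := card_filter_add_card_filter_not (s := Icc 1 g) (fun t => w t < F - w s + 1)
  rw [hw.card_filter_lt, Nat.count_succ_eq_count (not_not.2 (hp.mem_sub_of_not_mem hgap)),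
    Nat.card_Icc] at hcompl
  have hsym := hp.sub_count_add_count_sub (x := w s + 1) (by have := hp.le_of_not_mem hgap; omega)
  rw [hw.count_succ_apply hs₁ hs₂, hw.count_succ_eq_of_isSymmetricAt hp,
    show F + 1 - (w s + 1) = F - w s by omega] at hsym
  rw [filter_congr fun t _ => show F - w s < w t ↔ ¬ w t < F - w s + 1 by omega]
  omega

theorem selfConjugate (hw : IsGapEnumeration p g w) (hp : IsSymmetricAt p F) :
    (∀ j, 1 ≤ j → j ≤ g →
      #{i ∈ Icc 1 g | j ≤ w (g + 1 - i) - (g - i)} = w (g + 1 - j) - (g - j)) ∧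
    (∀ j, g < j → #{i ∈ Icc 1 g | j ≤ w (g + 1 - i) - (g - i)} = 0) := by
  have hreflect : ∀ j, #{i ∈ Icc 1 g | j ≤ w (g + 1 - i) - (g - i)} =
      #{t ∈ Icc 1 g | j ≤ w t - (t - 1)} := fun j => by
    refine Eq.trans (congrArg card (filter_congr fun i hi => ?_))
      (card_filter_Icc_reflect (fun t => j ≤ w t - (t - 1)) g)
    rw [mem_Icc] at hi
    rw [show g + 1 - i - 1 = g - i by omega]
  refine ⟨fun j hj₁ hj₂ => ?_, fun j hj => ?_⟩
  · have hfilter : {t ∈ Icc 1 g | j ≤ w t - (t - 1)} =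
        {t ∈ Icc 1 g | F - w (g + 1 - j) < w t} := filter_congr fun t ht => by
      rw [mem_Icc] at ht
      have := hw.le_sub_iff hp (s := g + 1 - j) (by omega) (by omega) ht.1 ht.2
      rwa [show g + 1 - (g + 1 - j) = j by omega] at this
    rw [hreflect, hfilter, hw.card_filter_sub_lt hp (by omega) (by omega)]
    omega
  · rw [hreflect, card_eq_zero, filter_eq_empty_iff]
    intro t ht
    rw [mem_Icc] at ht
    have := hw.sub_add_count hp ht.1 ht.2
    omega

end IsGapEnumeration

lemma Int.exists_lt_dvd_sub_mul {u e : ℤ} (hue : IsCoprime u e) (he : 0 < e) (n : ℤ) :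
    ∃ r : ℕ, (r : ℤ) < e ∧ e ∣ n - r * u := by
  obtain ⟨x, y, hxy⟩ := hue
  refine ⟨(n * x % e).toNat, ?_, ?_⟩
  · rw [Int.toNat_of_nonneg (Int.emod_nonneg _ he.ne')]; exact Int.emod_lt_of_pos _ he
  · rw [Int.toNat_of_nonneg (Int.emod_nonneg _ he.ne')]
    obtain ⟨q, hq⟩ := Int.dvd_self_sub_of_emod_eq (a := n * x) rfl (b := e)
    exact ⟨n * y + q * u, by linear_combination u * hq - n * hxy⟩

lemma Int.eq_of_dvd_sub_mul {u e : ℤ} (hue : IsCoprime u e) {r r' : ℕ} (hr : (r : ℤ) < e)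
    (hr' : (r' : ℤ) < e) (h : e ∣ (r - r') * u) : r = r' := by
  have := Int.eq_zero_of_abs_lt_dvd (hue.symm.dvd_of_dvd_mul_right h) (by rw [abs_lt]; omega)
  omega

section Gcd

variable (a : ℕ → ℕ)

lemma dseq_one : dseq a 1 = a 1 := by simp [dseq]

lemma dseq_dvd {i j : ℕ} (hj : j ∈ Icc 1 i) : dseq a i ∣ a j := Finset.gcd_dvd hj

lemma dseq_succ (i : ℕ) : dseq a (i + 1) = Nat.gcd (a (i + 1)) (dseq a i) := by
  rw [dseq, ← insert_Icc_right_eq_Icc_add_one (by omega), gcd_insert]; rfl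

lemma dseq_pos (ha : 0 < a 1) {i : ℕ} (hi : 1 ≤ i) : 0 < dseq a i :=
  Nat.pos_of_dvd_of_pos (dseq_dvd a (mem_Icc.2 ⟨le_rfl, hi⟩)) ha

def dseqRatio (i : ℕ) : ℕ := dseq a (i - 1) / dseq a i

lemma dseq_eq_mul_dseqRatio (i : ℕ) : dseq a i = dseq a (i + 1) * dseqRatio a (i + 1) :=
  (Nat.mul_div_cancel' (by rw [dseq_succ]; exact Nat.gcd_dvd_right _ _)).symm

lemma natCast_dseq_eq_mul (i : ℕ) :
    (dseq a i : ℤ) = dseq a (i + 1) * dseqRatio a (i + 1) := by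
  exact_mod_cast dseq_eq_mul_dseqRatio a i

lemma natCast_apply_eq_mul (i : ℕ) :
    (a (i + 1) : ℤ) = dseq a (i + 1) * ((a (i + 1) / dseq a (i + 1) : ℕ) : ℤ) := by
  exact_mod_cast (Nat.mul_div_cancel' (dseq_dvd a (mem_Icc.2 ⟨by omega, le_rfl⟩))).symm

lemma dseqRatio_pos (ha : 0 < a 1) {i : ℕ} (hi : 1 ≤ i) : 0 < dseqRatio a (i + 1) :=
  Nat.pos_of_ne_zero fun h0 => (dseq_pos a ha hi).ne' (by rw [dseq_eq_mul_dseqRatio, h0, mul_zero])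

lemma coprime_div_dseq_dseqRatio (ha : 0 < a 1) {i : ℕ} (hi : 1 ≤ i) :
    Nat.Coprime (a (i + 1) / dseq a (i + 1)) (dseqRatio a (i + 1)) := by
  have hpos := dseq_pos a ha (Nat.le_succ_of_le hi)
  rw [dseq_succ] at hpos
  simpa only [dseqRatio, Nat.add_sub_cancel, ← dseq_succ] using Nat.coprime_div_gcd_div_gcd hpos

end Gcd

section BoxRepresentation

variable (a : ℕ → ℕ)

lemma exists_digit (ha : 0 < a 1) {i : ℕ} (hi : 1 ≤ i) {n : ℤ}
    (hn : (dseq a (i + 1) : ℤ) ∣ n) :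
    ∃ r < dseqRatio a (i + 1), (dseq a i : ℤ) ∣ n - r * a (i + 1) := by
  obtain ⟨n', rfl⟩ := hn
  obtain ⟨r, hr, hdvd⟩ := Int.exists_lt_dvd_sub_mul
    (Nat.isCoprime_iff_coprime.2 (coprime_div_dseq_dseqRatio a ha hi))
    (Int.natCast_pos.2 (dseqRatio_pos a ha hi)) n'
  refine ⟨r, by exact_mod_cast hr, ?_⟩
  rw [natCast_dseq_eq_mul, natCast_apply_eq_mul a i, mul_left_comm, ← mul_sub]
  exact mul_dvd_mul_left _ hdvd

lemma digit_unique (ha : 0 < a 1) {i : ℕ} (hi : 1 ≤ i) {r r' : ℕ}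
    (hr : r < dseqRatio a (i + 1)) (hr' : r' < dseqRatio a (i + 1))
    (h : (dseq a i : ℤ) ∣ (r - r') * a (i + 1)) : r = r' := by
  refine Int.eq_of_dvd_sub_mul (Nat.isCoprime_iff_coprime.2 (coprime_div_dseq_dseqRatio a ha hi))
    (by exact_mod_cast hr) (by exact_mod_cast hr') ?_
  rw [natCast_dseq_eq_mul, natCast_apply_eq_mul a i, mul_left_comm] at h
  exact (mul_dvd_mul_iff_left (by exact_mod_cast (dseq_pos a ha (by omega)).ne')).1 h

def boxSum (i : ℕ) (k : ℕ → ℕ) : ℤ := ∑ j ∈ Icc 2 i, (k j : ℤ) * a j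

def InBox (i : ℕ) (k : ℕ → ℕ) : Prop := ∀ j ∈ Icc 2 i, k j < dseqRatio a j

variable {a}

lemma boxSum_one (k : ℕ → ℕ) : boxSum a 1 k = 0 := by simp [boxSum]

lemma boxSum_nonneg (i : ℕ) (k : ℕ → ℕ) : 0 ≤ boxSum a i k :=
  sum_nonneg fun _ _ => by positivity

lemma boxSum_succ {i : ℕ} (hi : 1 ≤ i) (k : ℕ → ℕ) :
    boxSum a (i + 1) k = boxSum a i k + k (i + 1) * a (i + 1) :=
  sum_Icc_succ_top (by omega) _

lemma boxSum_update_succ {i : ℕ} (hi : 1 ≤ i) (k : ℕ → ℕ) (r : ℕ) :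
    boxSum a (i + 1) (Function.update k (i + 1) r) = boxSum a i k + r * a (i + 1) := by
  rw [boxSum_succ hi, Function.update_self]
  congr 1
  exact sum_congr rfl fun _ hj => by
    rw [Function.update_of_ne (by rw [mem_Icc] at hj; omega)]

lemma dseq_dvd_boxSum (i : ℕ) (k : ℕ → ℕ) : (dseq a i : ℤ) ∣ boxSum a i k :=
  dvd_sum fun _ hj => Dvd.dvd.mul_left (Int.natCast_dvd_natCast.2
    (dseq_dvd a (Icc_subset_Icc_left one_le_two hj))) _

lemma inBox_one (k : ℕ → ℕ) : InBox a 1 k := fun j hj => by rw [mem_Icc] at hj; omega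

lemma InBox.of_succ {i : ℕ} {k : ℕ → ℕ} (hk : InBox a (i + 1) k) : InBox a i k :=
  fun j hj => hk j (Icc_subset_Icc_right (Nat.le_succ i) hj)

lemma InBox.update {i : ℕ} {k : ℕ → ℕ} (hk : InBox a i k) {r : ℕ}
    (hr : r < dseqRatio a (i + 1)) : InBox a (i + 1) (Function.update k (i + 1) r) := by
  intro j hj
  rcases eq_or_ne j (i + 1) with rfl | hne
  · rwa [Function.update_self]
  · rw [Function.update_of_ne hne]
    exact hk j (mem_Icc.2 ⟨(mem_Icc.1 hj).1, by have := (mem_Icc.1 hj).2; omega⟩)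

theorem exists_boxRep (ha : 0 < a 1) {i : ℕ} (hi : 1 ≤ i) {n : ℤ} (hn : (dseq a i : ℤ) ∣ n) :
    ∃ (k₁ : ℤ) (k : ℕ → ℕ), InBox a i k ∧ n = k₁ * a 1 + boxSum a i k := by
  induction i, hi using Nat.le_induction generalizing n with
  | base =>
    rw [dseq_one] at hn
    exact ⟨n / a 1, 0, inBox_one _, by rw [boxSum_one, add_zero, Int.ediv_mul_cancel hn]⟩
  | succ i hi ih =>
    obtain ⟨r, hr, hdvd⟩ := exists_digit a ha hi hn
    obtain ⟨k₁, k, hk, hrep⟩ := ih hdvd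
    exact ⟨k₁, Function.update k (i + 1) r, hk.update hr,
      by rw [boxSum_update_succ hi]; linear_combination hrep⟩

theorem boxRep_unique (ha : 0 < a 1) {i : ℕ} (hi : 1 ≤ i) {k₁ k₁' : ℤ} {k k' : ℕ → ℕ}
    (hk : InBox a i k) (hk' : InBox a i k')
    (h : k₁ * a 1 + boxSum a i k = k₁' * a 1 + boxSum a i k') : k₁ = k₁' := by
  induction i, hi using Nat.le_induction generalizing k k' with
  | base =>
    rw [boxSum_one, boxSum_one, add_zero, add_zero] at h
    exact mul_right_cancel₀ (by exact_mod_cast ha.ne') h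
  | succ i hi ih =>
    rw [boxSum_succ hi, boxSum_succ hi] at h
    have htop : k (i + 1) = k' (i + 1) := by
      refine digit_unique a ha hi (hk _ (mem_Icc.2 ⟨by omega, le_rfl⟩))
        (hk' _ (mem_Icc.2 ⟨by omega, le_rfl⟩)) ?_
      rw [show ((k (i + 1) : ℤ) - k' (i + 1)) * a (i + 1) =
        (k₁' - k₁) * a 1 + (boxSum a i k' - boxSum a i k) by linear_combination h]
      exact dvd_add (Dvd.dvd.mul_left (Int.natCast_dvd_natCast.2
        (dseq_dvd a (mem_Icc.2 ⟨le_rfl, hi⟩))) _)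
        (dvd_sub (dseq_dvd_boxSum i k') (dseq_dvd_boxSum i k))
    exact ih hk.of_succ hk'.of_succ (by rw [htop] at h; linear_combination h)

end BoxRepresentation

section Semigroup

variable {m : ℕ} {a : ℕ → ℕ}

lemma InSemigroup.add {x y : ℕ} (hx : InSemigroup m a x) (hy : InSemigroup m a y) :
    InSemigroup m a (x + y) := by
  obtain ⟨c, rfl⟩ := hx
  obtain ⟨c', rfl⟩ := hy
  exact ⟨c + c', by simp only [Pi.add_apply, add_mul, sum_add_distrib]⟩

lemma InSemigroup.mul_left {x : ℕ} (hx : InSemigroup m a x) (q : ℕ) :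
    InSemigroup m a (q * x) := by
  obtain ⟨c, rfl⟩ := hx
  exact ⟨q • c, by simp only [mul_sum, Pi.smul_apply, smul_eq_mul, mul_assoc]⟩

lemma inSemigroup_sum (c : ℕ → ℕ) : InSemigroup m a (∑ j ∈ Icc 1 m, c j * a j) := ⟨c, rfl⟩

namespace Telescopic

lemma one_le (h : Telescopic m a) : 1 ≤ m := le_trans one_le_two h.1

lemma apply_one_pos (h : Telescopic m a) : 0 < a 1 := h.2.1 1 le_rfl h.one_le

lemma dseqRatio_mul_mem (h : Telescopic m a) {i : ℕ} (hi : 1 ≤ i) (him : i + 1 ≤ m) :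
    InSemigroup i a (dseqRatio a (i + 1) * a (i + 1)) := by
  obtain ⟨c, hc⟩ := h.2.2.2 (i + 1) (by omega) him
  rw [Nat.add_sub_cancel] at hc
  refine ⟨c, ?_⟩
  calc dseqRatio a (i + 1) * a (i + 1)
      = dseq a i * (a (i + 1) / dseq a (i + 1)) := by
        conv_lhs => rw [← Nat.mul_div_cancel' (dseq_dvd a (mem_Icc.2 ⟨by omega, le_rfl⟩))]
        rw [dseq_eq_mul_dseqRatio a i]
        ring
    _ = ∑ j ∈ Icc 1 i, c j * a j := by
        rw [hc, mul_sum]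
        exact sum_congr rfl fun j hj => by rw [mul_left_comm, Nat.mul_div_cancel' (dseq_dvd a hj)]

theorem exists_boxRep_of_inSemigroup (h : Telescopic m a) {i : ℕ} (hi : 1 ≤ i) (him : i ≤ m)
    {n : ℕ} (hn : InSemigroup i a n) :
    ∃ (k₁ : ℕ) (k : ℕ → ℕ), InBox a i k ∧ (n : ℤ) = k₁ * a 1 + boxSum a i k := by
  induction i, hi using Nat.le_induction generalizing n with
  | base =>
    obtain ⟨c, rfl⟩ := hn
    exact ⟨c 1, 0, inBox_one _, by simp [boxSum_one]⟩
  | succ i hi ih =>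
    obtain ⟨c, rfl⟩ := hn
    set e := dseqRatio a (i + 1)
    -- carrying: `e` copies of `a (i + 1)` are traded for generators of lower index
    have hsplit : ∑ j ∈ Icc 1 (i + 1), c j * a j =
        (∑ j ∈ Icc 1 i, c j * a j + c (i + 1) / e * (e * a (i + 1))) +
          c (i + 1) % e * a (i + 1) := by
      rw [sum_Icc_succ_top (by omega)]
      nth_rewrite 1 [← Nat.div_add_mod (c (i + 1)) e]
      ring
    obtain ⟨k₁, k, hk, hrep⟩ := ih (by omega)
      ((inSemigroup_sum c).add ((h.dseqRatio_mul_mem hi him).mul_left _))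
    refine ⟨k₁, Function.update k (i + 1) (c (i + 1) % e),
      hk.update (Nat.mod_lt _ (dseqRatio_pos a h.apply_one_pos hi)), ?_⟩
    rw [hsplit, Nat.cast_add, hrep, boxSum_update_succ hi]
    push_cast
    ring

theorem inSemigroup_iff (h : Telescopic m a) {k₁ : ℤ} {k : ℕ → ℕ} (hk : InBox a m k) {n : ℕ}
    (hn : (n : ℤ) = k₁ * a 1 + boxSum a m k) : InSemigroup m a n ↔ 0 ≤ k₁ := by
  constructor
  · intro hS
    obtain ⟨k₁', k', hk', hrep⟩ := h.exists_boxRep_of_inSemigroup h.one_le le_rfl hS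
    rw [boxRep_unique h.apply_one_pos h.one_le hk hk' (hn.symm.trans hrep)]
    positivity
  · intro hk₁
    refine ⟨Function.update k 1 k₁.toNat, ?_⟩
    rw [← Nat.cast_inj (R := ℤ), hn, ← insert_Icc_add_one_left_eq_Icc h.one_le, Nat.cast_sum,
      sum_insert (by simp), Function.update_self]
    push_cast
    rw [Int.toNat_of_nonneg hk₁]
    congr 1
    exact sum_congr rfl fun j hj => by
      rw [Function.update_of_ne (by rw [mem_Icc] at hj; omega)]

end Telescopic

end Semigroup

def frobeniusNumber (m : ℕ) (a : ℕ → ℕ) : ℤ := boxSum a m (fun j => dseqRatio a j - 1) - a 1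

lemma frobeniusNumber_sub_boxRep {m : ℕ} {a : ℕ → ℕ} {k : ℕ → ℕ} (hk : InBox a m k) (k₁ : ℤ) :
    InBox a m (fun j => dseqRatio a j - 1 - k j) ∧
      frobeniusNumber m a - (k₁ * a 1 + boxSum a m k) =
        (-1 - k₁) * a 1 + boxSum a m (fun j => dseqRatio a j - 1 - k j) := by
  refine ⟨fun j hj => by have := hk j hj; dsimp only; omega, ?_⟩
  have hsum : boxSum a m (fun j => dseqRatio a j - 1) =
      boxSum a m k + boxSum a m (fun j => dseqRatio a j - 1 - k j) := by
    rw [boxSum, boxSum, boxSum, ← sum_add_distrib]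
    exact sum_congr rfl fun j hj => by
      have := hk j hj
      rw [← add_mul]
      congr 1
      omega
  rw [frobeniusNumber, hsum]
  ring

namespace Telescopic

variable {m : ℕ} {a : ℕ → ℕ}

lemma exists_boxRep (h : Telescopic m a) (n : ℤ) :
    ∃ (k₁ : ℤ) (k : ℕ → ℕ), InBox a m k ∧ n = k₁ * a 1 + boxSum a m k :=
  _root_.exists_boxRep h.apply_one_pos h.one_le (by rw [h.2.2.1, Nat.cast_one]; exact one_dvd n)

theorem inSemigroup_iff_not_inSemigroup (h : Telescopic m a) {n n' : ℕ}
    (hnn' : (n + n' : ℤ) = frobeniusNumber m a) : InSemigroup m a n ↔ ¬ InSemigroup m a n' := by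
  obtain ⟨k₁, k, hk, hrep⟩ := h.exists_boxRep n
  obtain ⟨hk', hcompl⟩ := frobeniusNumber_sub_boxRep hk k₁
  rw [h.inSemigroup_iff hk hrep, h.inSemigroup_iff hk' (by rw [← hcompl, ← hrep]; linarith)]
  omega

theorem le_frobeniusNumber (h : Telescopic m a) {n : ℕ} (hn : ¬ InSemigroup m a n) :
    (n : ℤ) ≤ frobeniusNumber m a := by
  obtain ⟨k₁, k, hk, hrep⟩ := h.exists_boxRep n
  obtain ⟨-, hcompl⟩ := frobeniusNumber_sub_boxRep hk k₁
  rw [h.inSemigroup_iff hk hrep, not_le] at hn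
  have := boxSum_nonneg m (fun j => dseqRatio a j - 1 - k j) (a := a)
  have : 0 ≤ (-1 - k₁) * a 1 := mul_nonneg (by omega) (by positivity)
  linarith

theorem isSymmetricAt (h : Telescopic m a) {n₀ : ℕ} (hn₀ : ¬ InSemigroup m a n₀) :
    IsSymmetricAt (InSemigroup m a) (frobeniusNumber m a).toNat := by
  have hF := h.le_frobeniusNumber hn₀
  intro n
  constructor
  · intro hn
    have := h.le_frobeniusNumber hn
    refine ⟨by omega, ?_⟩
    by_contra hc
    exact hn ((h.inSemigroup_iff_not_inSemigroup (by omega)).2 hc)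
  · rintro ⟨hnF, hS⟩ hn
    exact (h.inSemigroup_iff_not_inSemigroup (by omega)).1 hn hS

end Telescopic

theorem stmt7_general (m : ℕ) (a : ℕ → ℕ) (h : Telescopic m a)
    (g : ℕ) (hg1 : 1 ≤ g)
    (w : ℕ → ℕ) (hmono : StrictMonoOn w (Set.Icc 1 g))
    (hmem : ∀ i, 1 ≤ i → i ≤ g → ¬ InSemigroup m a (w i))
    (hsurj : ∀ n, ¬ InSemigroup m a n → ∃ i, 1 ≤ i ∧ i ≤ g ∧ w i = n) :
    (∀ j, 1 ≤ j → j ≤ g →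
      ((Finset.Icc 1 g).filter fun i => j ≤ w (g + 1 - i) - (g - i)).card
        = w (g + 1 - j) - (g - j)) ∧
    (∀ j, g < j →
      ((Finset.Icc 1 g).filter fun i => j ≤ w (g + 1 - i) - (g - i)).card = 0) := by
  classical
  exact IsGapEnumeration.selfConjugate ⟨hmono, hmem, hsurj⟩ (h.isSymmetricAt (hmem 1 le_rfl hg1))

/-- The partition μ = (w_g - (g-1), …, w_1 - 0) attached to a telescopic sequence is
self-conjugate: its Young diagram is symmetric. -/
theorem stmt7 (m : ℕ) (a : ℕ → ℕ) (h : Telescopic m a)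
    (g : ℕ) (hg : g = {n : ℕ | ¬ InSemigroup m a n}.ncard) (hg1 : 1 ≤ g)
    (w : ℕ → ℕ) (hmono : StrictMonoOn w (Set.Icc 1 g))
    (hmem : ∀ i, 1 ≤ i → i ≤ g → ¬ InSemigroup m a (w i))
    (hsurj : ∀ n, ¬ InSemigroup m a n → ∃ i, 1 ≤ i ∧ i ≤ g ∧ w i = n) :
    (∀ j, 1 ≤ j → j ≤ g →
      ((Finset.Icc 1 g).filter fun i => j ≤ w (g + 1 - i) - (g - i)).card
        = w (g + 1 - j) - (g - j)) ∧
    (∀ j, g < j →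
      ((Finset.Icc 1 g).filter fun i => j ≤ w (g + 1 - i) - (g - i)).card = 0) :=
  stmt7_general m a h g hg1 w hmono hmem hsurj
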